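/- Fix θ ∈ (-π/2, π/2) and t ≥ 0. For all bounded continuous φ, ψ : ℂ → ℂ, ⟨P_t^θ φ, ψ⟩_{L²(γ)} = ⟨φ, P_t^{-θ} ψ⟩_{L²(γ)}; that is, ∫_ℂ (P_t^θ φ)(x) · conj(ψ(x)) dγ(x) = ∫_ℂ φ(x) · conj((P_t^{-θ} ψ)(x)) dγ(x). In particular the adjoint of P_t^θ in L²(γ), restricted to bounded continuous functions, is P_t^{-θ}. -/

import Mathlib

open MeasureTheory Complex Filter Finset
open scoped Real ComplexConjugate

noncomputable def gamma : MeasureTheory.Measure ℂ :=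
  MeasureTheory.volume.withDensity fun z =>
    ENNReal.ofReal ((2 * Real.pi)⁻¹ * Real.exp (-(z.re ^ 2 + z.im ^ 2) / 2))
/-- The complex Ornstein–Uhlenbeck semigroup (Mehler formula form). -/
noncomputable def P (θ t : ℝ) (φ : ℂ → ℂ) (x : ℂ) : ℂ :=
  ∫ y, φ (Complex.exp (-((Real.cos θ : ℂ) + (Real.sin θ : ℂ) * Complex.I) * t) * x
      + (Real.sqrt (1 - Real.exp (-2 * t * Real.cos θ)) : ℂ) * y) ∂gamma

/-! ### Auxiliary material -/

noncomputable def Dr (z : ℂ) : ℝ := (2 * Real.pi)⁻¹ * Real.exp (-(z.re ^ 2 + z.im ^ 2) / 2)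

lemma gamma_eq : gamma = MeasureTheory.volume.withDensity fun z => ENNReal.ofReal (Dr z) := rfl

lemma S_eq_normSq (z : ℂ) : z.re ^ 2 + z.im ^ 2 = Complex.normSq z := by
  simp [Complex.normSq_apply]; ring

lemma Dr_cont : Continuous Dr := by unfold Dr; fun_prop

lemma Dr_meas : Measurable Dr := Dr_cont.measurable

lemma Dr_nonneg (z : ℂ) : 0 ≤ Dr z := by unfold Dr; positivity

lemma Dr_mul_unit {c : ℂ} (hc : Complex.normSq c = 1) (z : ℂ) : Dr (c * z) = Dr z := by
  unfold Dr
  rw [S_eq_normSq, S_eq_normSq, Complex.normSq_mul, hc, one_mul]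

lemma Dr_rot {r b : ℝ} (h : r ^ 2 + b ^ 2 = 1) (u v : ℂ) :
    Dr ((r : ℂ) * u - (b : ℂ) * v) * Dr ((b : ℂ) * u + (r : ℂ) * v) = Dr u * Dr v := by
  unfold Dr
  rw [mul_mul_mul_comm, mul_mul_mul_comm ((2 * Real.pi)⁻¹) _ ((2 * Real.pi)⁻¹),
    ← Real.exp_add, ← Real.exp_add]
  congr 2
  simp only [Complex.sub_re, Complex.sub_im, Complex.add_re, Complex.add_im, Complex.mul_re,
    Complex.mul_im, Complex.ofReal_re, Complex.ofReal_im]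
  linear_combination (-(u.re ^ 2 + u.im ^ 2 + v.re ^ 2 + v.im ^ 2) / 2) * h

lemma Dr_integrable : Integrable Dr (volume : Measure ℂ) := by
  have h1 : Integrable (fun x : ℝ => Real.exp (-(1/2) * x ^ 2)) volume :=
    integrable_exp_neg_mul_sq (by norm_num)
  have h2 : Integrable (fun p : ℝ × ℝ =>
      Real.exp (-(1/2) * p.1 ^ 2) * Real.exp (-(1/2) * p.2 ^ 2)) (volume : Measure (ℝ × ℝ)) :=
    h1.mul_prod h1
  have h3 := (Complex.volume_preserving_equiv_real_prod.integrable_comp_emb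
      (Complex.measurableEquivRealProd.measurableEmbedding)).2 (h2.const_mul ((2 * Real.pi)⁻¹))
  have : Dr = (fun p : ℝ × ℝ => (2 * Real.pi)⁻¹ *
      (Real.exp (-(1/2) * p.1 ^ 2) * Real.exp (-(1/2) * p.2 ^ 2)))
      ∘ Complex.measurableEquivRealProd := by
    funext z
    simp only [Function.comp_apply, Complex.measurableEquivRealProd_apply, Dr, ← Real.exp_add]
    ring_nf
  rw [this]
  exact h3

instance gamma_finite : IsFiniteMeasure gamma := by
  rw [gamma_eq]
  exact MeasureTheory.isFiniteMeasure_withDensity Dr_integrable.lintegral_lt_top.ne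

lemma map_withDensity' {α β : Type*} [MeasurableSpace α] [MeasurableSpace β]
    (μ : Measure α) {f : α → β} (hf : Measurable f) {d : β → ENNReal} (hd : Measurable d) :
    (μ.withDensity (d ∘ f)).map f = (μ.map f).withDensity d := by
  ext s hs
  rw [Measure.map_apply hf hs, withDensity_apply _ (hf hs), withDensity_apply _ hs,
    MeasureTheory.setLIntegral_map hs hd hf]
  rfl

lemma mp_withDensity {α : Type*} [MeasurableSpace α] {μ : Measure α} {f : α → α}
    (hmp : MeasurePreserving f μ μ) {d : α → ENNReal} (hd : Measurable d)
    (hinv : ∀ x, d (f x) = d x) :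
    MeasurePreserving f (μ.withDensity d) (μ.withDensity d) := by
  refine ⟨hmp.measurable, ?_⟩
  have h1 : d ∘ f = d := funext hinv
  rw [← h1, map_withDensity' μ hmp.measurable hd, hmp.map_eq, h1]

lemma prod_withDensity {α β : Type*} [MeasurableSpace α] [MeasurableSpace β]
    {μ : Measure α} {ν : Measure β} [SigmaFinite μ] [SigmaFinite ν]
    {f : α → ENNReal} {g : β → ENNReal} (hf : Measurable f) (hg : Measurable g)
    [SigmaFinite (μ.withDensity f)] [SigmaFinite (ν.withDensity g)] :
    (μ.withDensity f).prod (ν.withDensity g)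
      = (μ.prod ν).withDensity (fun p => f p.1 * g p.2) := by
  refine Measure.prod_eq fun s t hs ht => ?_
  rw [withDensity_apply _ (hs.prod ht), ← Measure.prod_restrict,
    withDensity_apply _ hs, withDensity_apply _ ht,
    MeasureTheory.lintegral_prod_mul hf.aemeasurable hg.aemeasurable]

lemma MeasureTheory.MeasurePreserving.congr_fun' {α β : Type*} [MeasurableSpace α] [MeasurableSpace β]
    {μ : Measure α} {ν : Measure β} {f g : α → β}
    (h : MeasurePreserving f μ ν) (he : g = f) : MeasurePreserving g μ ν := he ▸ h

lemma mul_volume_preserving (c : ℂ) (hc : Complex.normSq c = 1) :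
    MeasurePreserving (fun z : ℂ => c * z) volume volume := by
  have hdet : LinearMap.det (Algebra.lmul ℝ ℂ c) = 1 := by
    rw [← Algebra.norm_apply, Algebra.norm_complex_apply, hc]
  have hmap : Measure.map (⇑(Algebra.lmul ℝ ℂ c)) volume = volume := by
    rw [Measure.map_linearMap_addHaar_eq_smul_addHaar volume (by rw [hdet]; norm_num), hdet]
    simp
  have hfun : (fun z : ℂ => c * z) = ⇑(Algebra.lmul ℝ ℂ c) := by funext z; simp
  refine ⟨(continuous_const.mul continuous_id).measurable, ?_⟩
  rw [hfun, hmap]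

lemma K_mp : MeasurePreserving
    (fun p : (ℝ × ℝ) × (ℝ × ℝ) => ((p.1.1, p.2.1), (p.1.2, p.2.2)))
    volume volume := by
  have ha : MeasurePreserving (MeasurableEquiv.prodAssoc : (ℝ × ℝ) × (ℝ × ℝ) ≃ᵐ ℝ × ℝ × ℝ × ℝ)
      ((volume.prod volume).prod (volume.prod volume))
      (volume.prod (volume.prod (volume.prod volume))) :=
    measurePreserving_prodAssoc _ _ _
  have hs : MeasurePreserving (Prod.swap : ℝ × ℝ → ℝ × ℝ) (volume.prod volume)
      (volume.prod volume) := Measure.measurePreserving_swap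
  have hinner : MeasurePreserving (fun q : ℝ × ℝ × ℝ => (q.2.1, (q.1, q.2.2)))
      (volume.prod (volume.prod volume)) (volume.prod (volume.prod volume)) := by
    have c1 : MeasurePreserving (MeasurableEquiv.prodAssoc.symm : ℝ × ℝ × ℝ ≃ᵐ (ℝ × ℝ) × ℝ)
        (volume.prod (volume.prod volume)) ((volume.prod volume).prod volume) :=
      (measurePreserving_prodAssoc _ _ _).symm _
    have c2 : MeasurePreserving (Prod.map (Prod.swap : ℝ × ℝ → ℝ × ℝ) (id : ℝ → ℝ))
        ((volume.prod volume).prod volume) ((volume.prod volume).prod volume) :=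
      hs.prod (MeasurePreserving.id _)
    have c3 : MeasurePreserving (MeasurableEquiv.prodAssoc : (ℝ × ℝ) × ℝ ≃ᵐ ℝ × ℝ × ℝ)
        ((volume.prod volume).prod volume) (volume.prod (volume.prod volume)) :=
      measurePreserving_prodAssoc _ _ _
    have := c3.comp (c2.comp c1)
    convert this using 1
    funext q
    rfl
  have hmid : MeasurePreserving
      (Prod.map (id : ℝ → ℝ) (fun q : ℝ × ℝ × ℝ => (q.2.1, (q.1, q.2.2))))
      (volume.prod (volume.prod (volume.prod volume)))
      (volume.prod (volume.prod (volume.prod volume))) :=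
    (MeasurePreserving.id _).prod hinner
  have hb : MeasurePreserving (MeasurableEquiv.prodAssoc.symm : ℝ × ℝ × ℝ × ℝ ≃ᵐ (ℝ × ℝ) × ℝ × ℝ)
      (volume.prod (volume.prod (volume.prod volume)))
      ((volume.prod volume).prod (volume.prod volume)) :=
    (measurePreserving_prodAssoc _ _ _).symm _
  have hcomp := hb.comp (hmid.comp ha)
  convert hcomp using 1
  all_goals rfl

lemma rot_mp (r b : ℝ) (hrb : r ^ 2 + b ^ 2 = 1) :
    MeasurePreserving (fun q : ℝ × ℝ => (r * q.1 - b * q.2, b * q.1 + r * q.2))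
      volume volume := by
  have hc : Complex.normSq (Complex.mk r b) = 1 := by
    simp [Complex.normSq_apply]; nlinarith
  have h1 := Complex.volume_preserving_equiv_real_prod
  have h2 := h1.symm Complex.measurableEquivRealProd
  have hmul := mul_volume_preserving (Complex.mk r b) hc
  have hcomp := h1.comp (hmul.comp h2)
  convert hcomp using 1
  · rfl
  · rfl
  funext q
  simp only [Function.comp_apply, Complex.measurableEquivRealProd_symm_apply,
    Complex.measurableEquivRealProd_apply]
  have : (Complex.mk r b * Complex.mk q.1 q.2)
      = Complex.mk (r * q.1 - b * q.2) (b * q.1 + r * q.2) := by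
    apply Complex.ext <;> simp [Complex.mul_re, Complex.mul_im] <;> ring
  rw [this]

lemma R_mp (r b : ℝ) (hrb : r ^ 2 + b ^ 2 = 1) :
    MeasurePreserving (fun p : ℂ × ℂ =>
      ((r : ℂ) * p.1 - (b : ℂ) * p.2, (b : ℂ) * p.1 + (r : ℂ) * p.2))
      volume volume := by
  have e1 := Complex.volume_preserving_equiv_real_prod
  have hJ : MeasurePreserving
      (Prod.map (⇑Complex.measurableEquivRealProd) (⇑Complex.measurableEquivRealProd))
      (volume : Measure (ℂ × ℂ)) (volume : Measure ((ℝ × ℝ) × (ℝ × ℝ))) := e1.prod e1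
  have hJ' : MeasurePreserving
      (Prod.map (⇑Complex.measurableEquivRealProd.symm) (⇑Complex.measurableEquivRealProd.symm))
      (volume : Measure ((ℝ × ℝ) × (ℝ × ℝ))) (volume : Measure (ℂ × ℂ)) :=
    (e1.symm _).prod (e1.symm _)
  have hrot := (rot_mp r b hrb).prod (rot_mp r b hrb)
  have hcomp := hJ'.comp (K_mp.comp (hrot.comp (K_mp.comp hJ)))
  convert hcomp using 1
  funext p
  simp only [Function.comp_apply, Prod.map_apply, Complex.measurableEquivRealProd_apply,
    Complex.measurableEquivRealProd_symm_apply]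
  refine Prod.ext ?_ ?_ <;>
  · apply Complex.ext <;>
    simp [Complex.mul_re, Complex.mul_im, Complex.sub_re, Complex.sub_im,
      Complex.add_re, Complex.add_im, Complex.ofReal_re, Complex.ofReal_im]

/-- the product density -/
noncomputable def dd (p : ℂ × ℂ) : ENNReal := ENNReal.ofReal (Dr p.1) * ENNReal.ofReal (Dr p.2)

lemma dd_meas : Measurable dd :=
  ((Dr_meas.comp measurable_fst).ennreal_ofReal).mul
    ((Dr_meas.comp measurable_snd).ennreal_ofReal)

lemma gamma_prod_eq : gamma.prod gamma = (volume : Measure (ℂ × ℂ)).withDensity dd := by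
  rw [gamma_eq]
  haveI : SigmaFinite (volume.withDensity fun z : ℂ => ENNReal.ofReal (Dr z)) := by
    rw [← gamma_eq]; infer_instance
  rw [_root_.prod_withDensity Dr_meas.ennreal_ofReal Dr_meas.ennreal_ofReal]
  rfl

lemma T_gamma_mp (a : ℂ) (b : ℝ) (ha : a ≠ 0) (h1 : Complex.normSq a + b ^ 2 = 1) :
    MeasurePreserving (fun p : ℂ × ℂ =>
      ((starRingEnd ℂ) a * p.1 - (b : ℂ) * p.2, (b : ℂ) * p.1 + a * p.2))
      (gamma.prod gamma) (gamma.prod gamma) := by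
  rw [gamma_prod_eq]
  set r : ℝ := ‖a‖ with hr
  have hr0 : 0 < r := by simpa [hr] using norm_pos_iff.mpr ha
  have hrne : (r : ℂ) ≠ 0 := by exact_mod_cast hr0.ne'
  have hr2 : r ^ 2 = Complex.normSq a := Complex.sq_norm a
  have hrb : r ^ 2 + b ^ 2 = 1 := by rw [hr2]; exact h1
  have hc1 : Complex.normSq ((starRingEnd ℂ) a / (r : ℂ)) = 1 := by
    rw [Complex.normSq_div, Complex.normSq_conj, Complex.normSq_ofReal, ← hr2, pow_two]
    exact div_self (by positivity)
  have hc2 : Complex.normSq (a / (r : ℂ)) = 1 := by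
    rw [Complex.normSq_div, Complex.normSq_ofReal, ← hr2, pow_two]
    exact div_self (by positivity)
  -- stage B
  have hBvol : MeasurePreserving (fun p : ℂ × ℂ => (((starRingEnd ℂ) a / (r : ℂ)) * p.1, p.2))
      (volume : Measure (ℂ × ℂ)) volume := by
    have := (mul_volume_preserving _ hc1).prod (MeasurePreserving.id (volume : Measure ℂ))
    refine this.congr_fun' ?_
    funext p; rfl
  have hB : MeasurePreserving (fun p : ℂ × ℂ => (((starRingEnd ℂ) a / (r : ℂ)) * p.1, p.2))
      ((volume : Measure (ℂ × ℂ)).withDensity dd) ((volume : Measure (ℂ × ℂ)).withDensity dd) :=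
    mp_withDensity hBvol dd_meas (fun p => by
      simp only [dd]; rw [Dr_mul_unit hc1])
  -- stage R
  have hR : MeasurePreserving (fun p : ℂ × ℂ =>
      ((r : ℂ) * p.1 - (b : ℂ) * p.2, (b : ℂ) * p.1 + (r : ℂ) * p.2))
      ((volume : Measure (ℂ × ℂ)).withDensity dd) ((volume : Measure (ℂ × ℂ)).withDensity dd) :=
    mp_withDensity (R_mp r b hrb) dd_meas (fun p => by
      simp only [dd]
      rw [← ENNReal.ofReal_mul (Dr_nonneg _), ← ENNReal.ofReal_mul (Dr_nonneg _),
        Dr_rot hrb])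
  -- stage C
  have hCvol : MeasurePreserving (fun p : ℂ × ℂ => (p.1, (a / (r : ℂ)) * p.2))
      (volume : Measure (ℂ × ℂ)) volume := by
    have := (MeasurePreserving.id (volume : Measure ℂ)).prod (mul_volume_preserving _ hc2)
    refine this.congr_fun' ?_
    funext p; rfl
  have hC : MeasurePreserving (fun p : ℂ × ℂ => (p.1, (a / (r : ℂ)) * p.2))
      ((volume : Measure (ℂ × ℂ)).withDensity dd) ((volume : Measure (ℂ × ℂ)).withDensity dd) :=
    mp_withDensity hCvol dd_meas (fun p => by
      simp only [dd]; rw [Dr_mul_unit hc2])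
  have hkey : a * (starRingEnd ℂ) a = ((r : ℂ)) ^ 2 := by
    rw [Complex.mul_conj, ← hr2]; push_cast; ring
  refine ((hC.comp hR).comp hB).congr_fun' ?_
  funext p
  simp only [Function.comp_apply]
  refine Prod.ext ?_ ?_
  · simp only
    field_simp
  · simp only
    field_simp
    ring_nf
    linear_combination (-((b:ℂ) * p.1)) * hkey
section Tail
open MeasureTheory Complex Filter Finset
open scoped Real ComplexConjugate

lemma Dr_neg (z : ℂ) : Dr (-z) = Dr z := by
  unfold Dr
  rw [Complex.neg_re, Complex.neg_im]
  ring_nf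

lemma gamma_neg_mp : MeasurePreserving (fun z : ℂ => -z) gamma gamma := by
  rw [gamma_eq]
  have hvol : MeasurePreserving (fun z : ℂ => -z) (volume : Measure ℂ) volume :=
    (mul_volume_preserving (-1) (by simp)).congr_fun' (funext fun z => by ring)
  exact mp_withDensity hvol Dr_meas.ennreal_ofReal (fun z => by rw [Dr_neg])

lemma N_gamma_mp : MeasurePreserving (fun p : ℂ × ℂ => (p.1, -p.2))
    (gamma.prod gamma) (gamma.prod gamma) :=
  ((MeasurePreserving.id gamma).prod gamma_neg_mp).congr_fun' (funext fun p => rfl)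

/-- The rotation as a measurable equivalence. -/
noncomputable def Te (a : ℂ) (b : ℝ) (key : a * (starRingEnd ℂ) a + ((b : ℂ)) ^ 2 = 1) :
    (ℂ × ℂ) ≃ᵐ (ℂ × ℂ) where
  toEquiv :=
  { toFun := fun p => ((starRingEnd ℂ) a * p.1 - (b : ℂ) * p.2, (b : ℂ) * p.1 + a * p.2)
    invFun := fun q => (a * q.1 + (b : ℂ) * q.2, -(b : ℂ) * q.1 + (starRingEnd ℂ) a * q.2)
    left_inv := by
      intro p
      refine Prod.ext ?_ ?_ <;> dsimp only
      · linear_combination p.1 * key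
      · linear_combination p.2 * key
    right_inv := by
      intro q
      refine Prod.ext ?_ ?_ <;> dsimp only
      · linear_combination q.1 * key
      · linear_combination q.2 * key }
  measurable_toFun := by
    show Measurable fun p : ℂ × ℂ => ((starRingEnd ℂ) a * p.1 - (b : ℂ) * p.2, (b : ℂ) * p.1 + a * p.2)
    fun_prop
  measurable_invFun := by
    show Measurable fun q : ℂ × ℂ => (a * q.1 + (b : ℂ) * q.2, -(b : ℂ) * q.1 + (starRingEnd ℂ) a * q.2)
    fun_prop

noncomputable def Ne' : (ℂ × ℂ) ≃ᵐ (ℂ × ℂ) where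
  toEquiv :=
  { toFun := fun p => (p.1, -p.2)
    invFun := fun p => (p.1, -p.2)
    left_inv := by intro p; simp
    right_inv := by intro p; simp }
  measurable_toFun := by
    show Measurable fun p : ℂ × ℂ => (p.1, -p.2)
    fun_prop
  measurable_invFun := by
    show Measurable fun p : ℂ × ℂ => (p.1, -p.2)
    fun_prop

end Tail
section Main
open MeasureTheory Complex Filter Finset
open scoped Real ComplexConjugate

/-- The adjoint of `P_t^θ` in `L²(γ)`, restricted to bounded continuous functions,
is `P_t^{-θ}`. -/
theorem Pt_adjoint (θ : ℝ) (hθ : θ ∈ Set.Ioo (-(Real.pi / 2)) (Real.pi / 2))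
    (t : ℝ) (ht : 0 ≤ t) (φ ψ : ℂ → ℂ)
    (hφc : Continuous φ) (hφb : ∃ C : ℝ, ∀ z : ℂ, ‖φ z‖ ≤ C)
    (hψc : Continuous ψ) (hψb : ∃ C : ℝ, ∀ z : ℂ, ‖ψ z‖ ≤ C) :
    ∫ x, P θ t φ x * conj (ψ x) ∂gamma = ∫ x, φ x * conj (P (-θ) t ψ x) ∂gamma := by
  obtain ⟨Cφ, hCφ⟩ := hφb
  obtain ⟨Cψ, hCψ⟩ := hψb
  have hCφ0 : 0 ≤ Cφ := le_trans (norm_nonneg _) (hCφ 0)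
  have hCψ0 : 0 ≤ Cψ := le_trans (norm_nonneg _) (hCψ 0)
  have hcos : 0 < Real.cos θ := Real.cos_pos_of_mem_Ioo hθ
  set a : ℂ := Complex.exp (-((Real.cos θ : ℂ) + (Real.sin θ : ℂ) * Complex.I) * (t : ℂ))
    with ha_def
  set b : ℝ := Real.sqrt (1 - Real.exp (-2 * t * Real.cos θ)) with hb_def
  have ha0 : a ≠ 0 := Complex.exp_ne_zero _
  have habs : ‖a‖ = Real.exp (-(t * Real.cos θ)) := by
    rw [ha_def, Complex.norm_exp]
    congr 1
    simp only [Complex.neg_re, Complex.mul_re, Complex.add_re, Complex.add_im,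
      Complex.ofReal_re, Complex.ofReal_im, Complex.mul_im, Complex.I_re, Complex.I_im]
    ring
  have hns : Complex.normSq a = Real.exp (-2 * t * Real.cos θ) := by
    rw [← Complex.sq_norm, habs, sq, ← Real.exp_add]
    congr 1
    ring
  have hle : Real.exp (-2 * t * Real.cos θ) ≤ 1 := by
    have h0 : -2 * t * Real.cos θ ≤ 0 := by nlinarith
    calc Real.exp (-2 * t * Real.cos θ) ≤ Real.exp 0 := Real.exp_le_exp.mpr h0
      _ = 1 := Real.exp_zero
  have hb2 : b ^ 2 = 1 - Real.exp (-2 * t * Real.cos θ) := Real.sq_sqrt (by linarith)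
  have h1 : Complex.normSq a + b ^ 2 = 1 := by rw [hns, hb2]; ring
  have key : a * (starRingEnd ℂ) a + ((b : ℂ)) ^ 2 = 1 := by
    rw [Complex.mul_conj]
    have : ((Complex.normSq a + b ^ 2 : ℝ) : ℂ) = 1 := by rw [h1]; norm_num
    push_cast at this ⊢
    linear_combination this
  have haconj : Complex.exp (-((Real.cos (-θ) : ℂ) + (Real.sin (-θ) : ℂ) * Complex.I) * (t : ℂ))
      = (starRingEnd ℂ) a := by
    rw [Real.cos_neg, Real.sin_neg, ha_def, ← Complex.exp_conj]
    congr 1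
    simp only [map_mul, map_neg, map_add, Complex.conj_ofReal, Complex.conj_I]
    push_cast
    ring
  have hbneg : Real.sqrt (1 - Real.exp (-2 * t * Real.cos (-θ))) = b := by
    rw [Real.cos_neg, hb_def]
  -- the substitution identity
  have hsub : ∀ u v : ℂ,
      a * ((starRingEnd ℂ) a * u - (b : ℂ) * v) + (b : ℂ) * ((b : ℂ) * u + a * v) = u :=
    fun u v => by linear_combination u * key
  -- integrability
  have hconjc : Continuous fun z : ℂ => (starRingEnd ℂ) z := continuous_star
  have hFcont : Continuous fun p : ℂ × ℂ => φ (a * p.1 + (b : ℂ) * p.2) * conj (ψ p.1) :=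
    (hφc.comp (by fun_prop)).mul (hconjc.comp (hψc.comp continuous_fst))
  have hGcont : Continuous fun p : ℂ × ℂ =>
      φ p.1 * conj (ψ ((starRingEnd ℂ) a * p.1 + (b : ℂ) * p.2)) :=
    (hφc.comp continuous_fst).mul (hconjc.comp (hψc.comp (by fun_prop)))
  have hbound : ∀ (f g : ℂ → ℂ) (x y : ℂ), ‖f x * conj (g y)‖ ≤ ‖f x‖ * ‖g y‖ := by
    intro f g x y
    rw [norm_mul, RCLike.norm_conj]
  have hFint : Integrable (fun p : ℂ × ℂ => φ (a * p.1 + (b : ℂ) * p.2) * conj (ψ p.1))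
      (gamma.prod gamma) := by
    refine Integrable.mono' (integrable_const (Cφ * Cψ)) hFcont.aestronglyMeasurable
      (ae_of_all _ fun p => ?_)
    calc ‖_‖ ≤ ‖φ (a * p.1 + (b : ℂ) * p.2)‖ * ‖ψ p.1‖ := hbound _ _ _ _
      _ ≤ Cφ * Cψ := mul_le_mul (hCφ _) (hCψ _) (norm_nonneg _) hCφ0
  have hGint : Integrable (fun p : ℂ × ℂ =>
      φ p.1 * conj (ψ ((starRingEnd ℂ) a * p.1 + (b : ℂ) * p.2))) (gamma.prod gamma) := by
    refine Integrable.mono' (integrable_const (Cφ * Cψ)) hGcont.aestronglyMeasurable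
      (ae_of_all _ fun p => ?_)
    calc ‖_‖ ≤ ‖φ p.1‖ * ‖ψ ((starRingEnd ℂ) a * p.1 + (b : ℂ) * p.2)‖ := hbound _ _ _ _
      _ ≤ Cφ * Cψ := mul_le_mul (hCφ _) (hCψ _) (norm_nonneg _) hCφ0
  -- measure preserving maps
  have hTmp : MeasurePreserving (⇑(Te a b key)) (gamma.prod gamma) (gamma.prod gamma) :=
    (T_gamma_mp a b ha0 h1).congr_fun' (funext fun p => rfl)
  have hNmp : MeasurePreserving (⇑Ne') (gamma.prod gamma) (gamma.prod gamma) :=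
    N_gamma_mp.congr_fun' (funext fun p => rfl)
  -- main calculation
  calc ∫ x, P θ t φ x * conj (ψ x) ∂gamma
      = ∫ x, ∫ y, φ (a * x + (b : ℂ) * y) * conj (ψ x) ∂gamma ∂gamma := by
        simp only [P, ← ha_def, ← hb_def]
        simp_rw [integral_mul_const]
    _ = ∫ p : ℂ × ℂ, φ (a * p.1 + (b : ℂ) * p.2) * conj (ψ p.1) ∂(gamma.prod gamma) :=
        (integral_prod _ hFint).symm
    _ = ∫ p : ℂ × ℂ, φ (a * ((Te a b key) p).1 + (b : ℂ) * ((Te a b key) p).2)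
          * conj (ψ ((Te a b key) p).1) ∂(gamma.prod gamma) :=
        (hTmp.integral_comp' (fun p => φ (a * p.1 + (b : ℂ) * p.2) * conj (ψ p.1))).symm
    _ = ∫ p : ℂ × ℂ, φ p.1 * conj (ψ ((starRingEnd ℂ) a * p.1 - (b : ℂ) * p.2))
          ∂(gamma.prod gamma) := by
        refine integral_congr_ae (ae_of_all _ fun p => ?_)
        simp only [Te, MeasurableEquiv.coe_mk, Equiv.coe_fn_mk]
        rw [hsub]
    _ = ∫ p : ℂ × ℂ, φ (Ne' p).1 * conj (ψ ((starRingEnd ℂ) a * (Ne' p).1 - (b : ℂ) * (Ne' p).2))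
          ∂(gamma.prod gamma) :=
        (hNmp.integral_comp' (fun p => φ p.1
          * conj (ψ ((starRingEnd ℂ) a * p.1 - (b : ℂ) * p.2)))).symm
    _ = ∫ p : ℂ × ℂ, φ p.1 * conj (ψ ((starRingEnd ℂ) a * p.1 + (b : ℂ) * p.2))
          ∂(gamma.prod gamma) := by
        refine integral_congr_ae (ae_of_all _ fun p => ?_)
        simp only [Ne', MeasurableEquiv.coe_mk, Equiv.coe_fn_mk]
        ring_nf
    _ = ∫ x, ∫ y, φ x * conj (ψ ((starRingEnd ℂ) a * x + (b : ℂ) * y)) ∂gamma ∂gamma :=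
        integral_prod _ hGint
    _ = ∫ x, φ x * conj (∫ y, ψ ((starRingEnd ℂ) a * x + (b : ℂ) * y) ∂gamma) ∂gamma := by
        refine integral_congr_ae (ae_of_all _ fun x => ?_)
        simp only [integral_const_mul, integral_conj]
    _ = ∫ x, φ x * conj (P (-θ) t ψ x) ∂gamma := by
        simp only [P, haconj, hbneg]
end Main
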